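/- Let L be a {0,1}-valued random variable and X, T random variables with finite ranges on the same probability space, and let c ∈ (0,1). Assume Pr(L=1 | X=x, T=t) ≤ c for every pair (x,t) with Pr(X=x, T=t) > 0. Then susp(X,T) ≤ (−log(1−c)/c)·Pr(L=1). -/

import Mathlib

open Finset

/-- Probability of an event `E` under the probability mass function `p`
on a finite sample space `Ω`. -/
noncomputable def Pr {Ω : Type*} [Fintype Ω] (p : Ω → ℝ) (E : Set Ω) : ℝ :=
  ∑ ω, E.indicator p ω

/-- Conditional probability `Pr(E | F)`. -/
noncomputable def cPr {Ω : Type*} [Fintype Ω] (p : Ω → ℝ) (E F : Set Ω) : ℝ :=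
  Pr p (E ∩ F) / Pr p F

/-- The suspicion given a random variable `Yv`:
`susp(Y) = Σ_y Pr(Y=y) · (−log₂ Pr(L=0 | Y=y))`. -/
noncomputable def susp {Ω Y : Type*} [Fintype Ω] [Fintype Y] (p : Ω → ℝ)
    (L : Ω → Bool) (Yv : Ω → Y) : ℝ :=
  ∑ y, Pr p {ω | Yv ω = y} * (-Real.logb 2 (cPr p {ω | L ω = false} {ω | Yv ω = y}))

/-- Mutual information (base 2) between two finite-valued random variables. -/
noncomputable def mutInfo {Ω S T : Type*} [Fintype Ω] [Fintype S] [Fintype T]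
    (p : Ω → ℝ) (Xv : Ω → S) (Av : Ω → T) : ℝ :=
  ∑ x, ∑ a, Pr p {ω | Xv ω = x ∧ Av ω = a} *
    Real.logb 2 (Pr p {ω | Xv ω = x ∧ Av ω = a} /
      (Pr p {ω | Xv ω = x} * Pr p {ω | Av ω = a}))

/-- Conditional Shannon entropy (base 2) `H(A | X)`. -/
noncomputable def condEntropy {Ω S T : Type*} [Fintype Ω] [Fintype S] [Fintype T]
    (p : Ω → ℝ) (Av : Ω → T) (Xv : Ω → S) : ℝ :=
  ∑ x, ∑ a, Pr p {ω | Xv ω = x ∧ Av ω = a} *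
    Real.logb 2 (Pr p {ω | Xv ω = x} / Pr p {ω | Xv ω = x ∧ Av ω = a})

/-- Conditional mutual information (base 2) `I(X; A | Z)`. -/
noncomputable def condMutInfo {Ω S T U : Type*} [Fintype Ω] [Fintype S] [Fintype T] [Fintype U]
    (p : Ω → ℝ) (Xv : Ω → S) (Av : Ω → T) (Zv : Ω → U) : ℝ :=
  ∑ z, ∑ x, ∑ a, Pr p {ω | Xv ω = x ∧ Av ω = a ∧ Zv ω = z} *
    Real.logb 2 ((Pr p {ω | Xv ω = x ∧ Av ω = a ∧ Zv ω = z} * Pr p {ω | Zv ω = z}) /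
      (Pr p {ω | Xv ω = x ∧ Zv ω = z} * Pr p {ω | Av ω = a ∧ Zv ω = z}))

/-
Conditioned on a fibre `A = {(X,T) = (x,t)}` of positive probability, the fibre contributes
`Pr(A) · (−log(1 − q))` to the suspicion, where `q = Pr(L=1 | A) ≤ c`. The function
`q ↦ −log(1 − q)` is convex and vanishes at `0`, so on `[0, c]` it lies below its chord,
`−log(1 − q) ≤ (−log(1 − c)/c)·q`. Hence each fibre contributes at most
`(−log(1 − c)/c)·Pr(L=1, A)`, and these sum to `(−log(1 − c)/c)·Pr(L=1)`.
-/

theorem ConvexOn.le_div_mul_of_map_zero {s : Set ℝ} {f : ℝ → ℝ} (hf : ConvexOn ℝ s f)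
    (h0 : 0 ∈ s) {c q : ℝ} (hcs : c ∈ s) (hf0 : f 0 = 0) (hc : 0 < c) (hq0 : 0 ≤ q)
    (hqc : q ≤ c) : f q ≤ f c / c * q := by
  have hw : 0 ≤ 1 - q / c := sub_nonneg.2 ((div_le_one hc).2 hqc)
  have h := hf.2 h0 hcs hw (div_nonneg hq0 hc.le) (sub_add_cancel 1 (q / c))
  simp only [zero_add, smul_eq_mul, hf0, mul_zero, div_mul_cancel₀ q hc.ne'] at h
  rwa [div_mul_comm]

theorem convexOn_neg_logb_one_sub {b : ℝ} (hb : 1 ≤ b) :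
    ConvexOn ℝ (Set.Iio 1) fun x => -Real.logb b (1 - x) := by
  have h := ((strictConcaveOn_log_Ioi.concaveOn.comp_affineMap
    (AffineMap.lineMap 1 0 : ℝ →ᵃ[ℝ] ℝ)).neg).smul (inv_nonneg.2 (Real.log_nonneg hb))
  have hs : (AffineMap.lineMap 1 0 : ℝ →ᵃ[ℝ] ℝ) ⁻¹' Set.Ioi 0 = Set.Iio 1 := by
    ext x; simp [AffineMap.lineMap_apply_ring']
  rw [hs] at h
  refine h.congr fun x _ => ?_
  simp [Real.logb, AffineMap.lineMap_apply_ring', div_eq_inv_mul, neg_add_eq_sub]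

theorem neg_logb_one_sub_le_mul {b c q : ℝ} (hb : 1 ≤ b) (hc0 : 0 < c) (hc1 : c < 1)
    (hq0 : 0 ≤ q) (hqc : q ≤ c) :
    -Real.logb b (1 - q) ≤ -Real.logb b (1 - c) / c * q := by
  have h := (convexOn_neg_logb_one_sub hb).le_div_mul_of_map_zero (by norm_num) hc1
    (by simp) hc0 hq0 hqc
  simpa only [neg_div] using h

section Pr

variable {Ω : Type*} [Fintype Ω] {p : Ω → ℝ}

theorem Pr_nonneg (hp : ∀ ω, 0 ≤ p ω) (E : Set Ω) : 0 ≤ Pr p E :=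
  Finset.sum_nonneg fun ω _ => Set.indicator_nonneg (fun ω _ => hp ω) ω

theorem Pr_inter_false_add_Pr_inter_true (L : Ω → Bool) (A : Set Ω) :
    Pr p ({ω | L ω = false} ∩ A) + Pr p ({ω | L ω = true} ∩ A) = Pr p A := by
  classical
  simp only [Pr, ← Finset.sum_add_distrib, Set.indicator_apply, Set.mem_inter_iff,
    Set.mem_ofPred_eq]
  refine Finset.sum_congr rfl fun ω _ => ?_
  cases L ω <;> simp

theorem sum_Pr_inter_fiber {Y : Type*} [Fintype Y] (E : Set Ω) (Yv : Ω → Y) :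
    ∑ y, Pr p (E ∩ {ω | Yv ω = y}) = Pr p E := by
  classical
  simp only [Pr, Set.indicator_apply, Set.mem_inter_iff, Set.mem_ofPred_eq]
  rw [Finset.sum_comm]
  refine Finset.sum_congr rfl fun ω _ => ?_
  simp [ite_and]

theorem cPr_false_eq_one_sub_cPr_true (L : Ω → Bool) {A : Set Ω} (hA : Pr p A ≠ 0) :
    cPr p {ω | L ω = false} A = 1 - cPr p {ω | L ω = true} A := by
  rw [cPr, cPr, eq_sub_iff_add_eq, ← add_div, Pr_inter_false_add_Pr_inter_true, div_self hA]

theorem Pr_mul_neg_logb_cPr_false_le (hp : ∀ ω, 0 ≤ p ω) (L : Ω → Bool) (A : Set Ω)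
    {c : ℝ} (hc0 : 0 < c) (hc1 : c < 1) (hA : 0 < Pr p A → cPr p {ω | L ω = true} A ≤ c) :
    Pr p A * -Real.logb 2 (cPr p {ω | L ω = false} A) ≤
      -Real.logb 2 (1 - c) / c * Pr p ({ω | L ω = true} ∩ A) := by
  rcases (Pr_nonneg hp A).eq_or_lt with hA0 | hApos
  · have hsplit := Pr_inter_false_add_Pr_inter_true (p := p) L A
    have htrue : Pr p ({ω | L ω = true} ∩ A) = 0 := by
      linarith [Pr_nonneg hp ({ω | L ω = false} ∩ A), Pr_nonneg hp ({ω | L ω = true} ∩ A)]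
    rw [← hA0, htrue]
    simp
  · have hq0 : 0 ≤ cPr p {ω | L ω = true} A := div_nonneg (Pr_nonneg hp _) hApos.le
    calc Pr p A * -Real.logb 2 (cPr p {ω | L ω = false} A)
        = Pr p A * -Real.logb 2 (1 - cPr p {ω | L ω = true} A) := by
          rw [cPr_false_eq_one_sub_cPr_true L hApos.ne']
      _ ≤ Pr p A * (-Real.logb 2 (1 - c) / c * cPr p {ω | L ω = true} A) :=
          mul_le_mul_of_nonneg_left
            (neg_logb_one_sub_le_mul one_le_two hc0 hc1 hq0 (hA hApos)) hApos.le
      _ = -Real.logb 2 (1 - c) / c * Pr p ({ω | L ω = true} ∩ A) := by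
          rw [cPr, mul_left_comm, mul_div_cancel₀ _ hApos.ne']

end Pr

theorem susp_le_of_cond_prob_le_general {Ω S U : Type*} [Fintype Ω] [Fintype S] [Fintype U]
    (p : Ω → ℝ) (hp : ∀ ω, 0 ≤ p ω)
    (X : Ω → S) (T : Ω → U) (L : Ω → Bool)
    (c : ℝ) (hc0 : 0 < c) (hc1 : c < 1)
    (hc : ∀ (x : S) (t : U), 0 < Pr p {ω | X ω = x ∧ T ω = t} →
      cPr p {ω | L ω = true} {ω | X ω = x ∧ T ω = t} ≤ c) :
    susp p L (fun ω => (X ω, T ω)) ≤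
      (-Real.logb 2 (1 - c) / c) * Pr p {ω | L ω = true} := by
  rw [← sum_Pr_inter_fiber {ω | L ω = true} (fun ω => (X ω, T ω)), Finset.mul_sum, susp]
  refine Finset.sum_le_sum fun ⟨x, t⟩ _ => ?_
  simp only [Prod.mk.injEq]
  exact Pr_mul_neg_logb_cPr_false_le hp L _ hc0 hc1 (hc x t)

/-- if `Pr(L=1 | X=x, T=t) ≤ c` for all `(x,t)` of positive
probability, then `susp(X,T) ≤ (−log₂(1−c)/c)·Pr(L=1)`. -/
theorem susp_le_of_cond_prob_le {Ω S U : Type*} [Fintype Ω] [Fintype S] [Fintype U]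
    (p : Ω → ℝ) (hp : ∀ ω, 0 ≤ p ω) (hp1 : ∑ ω, p ω = 1)
    (X : Ω → S) (T : Ω → U) (L : Ω → Bool)
    (c : ℝ) (hc0 : 0 < c) (hc1 : c < 1)
    (hc : ∀ (x : S) (t : U), 0 < Pr p {ω | X ω = x ∧ T ω = t} →
      cPr p {ω | L ω = true} {ω | X ω = x ∧ T ω = t} ≤ c) :
    susp p L (fun ω => (X ω, T ω)) ≤
      (-Real.logb 2 (1 - c) / c) * Pr p {ω | L ω = true} :=
  susp_le_of_cond_prob_le_general p hp X T L c hc0 hc1 hc
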